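/- Let X be a Banach space with separable dual and let 1 < p < ∞. Then Dz(X) ≤ Sz(L_p(X)). -/

import Mathlib

/-!
Fix `ε > 0` and consider the functionals `f ↦ ∑ₖ gₖ (∫_{Aₖ} f)` on `L_p(X)`, where `(Aₖ)` is a
finite measurable partition of `[0,1]` and the `gₖ` lie in a set `S ⊆ B_{X*}`. By transfinite
induction, every such functional built from the `α`-th dentability derived set of `B_{X*}` (at `ε`)
survives `α` Szlenk derivations of `B_{L_p(X)*}` (at `ε/4`).

In the successor step, a point `g` lying in no weak*-slice of diameter `< ε` is a weak*-limit of
convex combinations of points of `S` that are `ε/3`-far from `g`. Splitting each `Aₖ` in the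
proportions of such a combination (exactly on the level sets of simple approximations of finitely
many test functions, since Lebesgue measure takes all intermediate values) gives a functional of the
same form that is weak*-close to the old one, yet at distance at least `ε/3` from it: test both on
the unit vector of `L_p(X)` that equals a norming vector of the difference on each piece.
-/

open Metric Set Filter TopologicalSpace
open scoped ENNReal

noncomputable section

/-- A set `U` in the dual of `X` is weak\*-open if every point of `U` has a basic weak\*
neighborhood (determined by finitely many points of `X`) contained in `U`. -/
def IsWeakStarOpen {X : Type*} [NormedAddCommGroup X] [NormedSpace ℝ X]
    (U : Set (X →L[ℝ] ℝ)) : Prop :=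
  ∀ f ∈ U, ∃ (n : ℕ) (x : Fin n → X) (δ : ℝ), 0 < δ ∧
    ∀ g : X →L[ℝ] ℝ, (∀ i, |g (x i) - f (x i)| < δ) → g ∈ U

/-- The Szlenk derivation: remove all points of `K` lying in a relatively weak\*-open
subset of `K` of norm diameter less than `ε`. -/
def szlenkDeriv {X : Type*} [NormedAddCommGroup X] [NormedSpace ℝ X]
    (ε : ℝ) (K : Set (X →L[ℝ] ℝ)) : Set (X →L[ℝ] ℝ) :=
  {f | f ∈ K ∧ ¬ ∃ U : Set (X →L[ℝ] ℝ), IsWeakStarOpen U ∧ f ∈ U ∧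
    EMetric.diam (K ∩ U) < ENNReal.ofReal ε}

/-- The dentability derivation: remove all points of `K` lying in a weak\*-slice of `K`
of norm diameter less than `ε`. -/
def dentDeriv {X : Type*} [NormedAddCommGroup X] [NormedSpace ℝ X]
    (ε : ℝ) (K : Set (X →L[ℝ] ℝ)) : Set (X →L[ℝ] ℝ) :=
  {f | f ∈ K ∧ ¬ ∃ (x : X) (t : ℝ), t < f x ∧
    EMetric.diam {g | g ∈ K ∧ t < g x} < ENNReal.ofReal ε}

/-- Transfinite iteration of a set derivation, with intersections at limit stages. -/
def derivIter {α : Type*} (D : Set α → Set α) (K : Set α) (o : Ordinal.{0}) : Set α :=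
  Ordinal.limitRecOn o K (fun _ ih => D ih) (fun o _ ih => ⋂ (β : {β : Ordinal.{0} // β < o}), ih β.1 β.2)

open scoped Classical in
/-- The ordinal index associated with a derivation: the least ordinal at which the iterated
derived set of `K` is empty, or `⊤` (i.e. `∞`) if the derived sets are never empty. -/
def derivIndex {α : Type*} (D : Set α → Set α) (K : Set α) : WithTop Ordinal.{0} :=
  if ∃ o : Ordinal.{0}, derivIter D K o = ∅
    then ((sInf {o : Ordinal.{0} | derivIter D K o = ∅} : Ordinal.{0}) : WithTop Ordinal.{0})
    else ⊤

/-- The `ε`-Szlenk index `Sz(X,ε)`. -/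
def SzEps (X : Type*) [NormedAddCommGroup X] [NormedSpace ℝ X] (ε : ℝ) : WithTop Ordinal.{0} :=
  derivIndex (szlenkDeriv (X := X) ε) (closedBall (0 : X →L[ℝ] ℝ) 1)

/-- The Szlenk index `Sz(X) = sup_{ε > 0} Sz(X,ε)`. -/
def Sz (X : Type*) [NormedAddCommGroup X] [NormedSpace ℝ X] : WithTop Ordinal.{0} :=
  ⨆ ε : {ε : ℝ // 0 < ε}, SzEps X ε.1

/-- The `ε`-weak\*-dentability index `Dz(X,ε)`. -/
def DzEps (X : Type*) [NormedAddCommGroup X] [NormedSpace ℝ X] (ε : ℝ) : WithTop Ordinal.{0} :=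
  derivIndex (dentDeriv (X := X) ε) (closedBall (0 : X →L[ℝ] ℝ) 1)

/-- The weak\*-dentability index `Dz(X) = sup_{ε > 0} Dz(X,ε)`. -/
def Dz (X : Type*) [NormedAddCommGroup X] [NormedSpace ℝ X] : WithTop Ordinal.{0} :=
  ⨆ ε : {ε : ℝ // 0 < ε}, DzEps X ε.1

/-- `L_p(X)`: the space of `X`-valued Bochner `p`-integrable functions on `[0,1]`. -/
abbrev LpOn (X : Type*) [NormedAddCommGroup X] (p : ℝ≥0∞) :=
  MeasureTheory.Lp (α := ℝ) X p ((MeasureTheory.volume : MeasureTheory.Measure ℝ).restrict (Icc 0 1))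

/-- A normalized weakly null sequence. -/
def IsNormalizedWeaklyNull {X : Type*} [NormedAddCommGroup X] [NormedSpace ℝ X] (y : ℕ → X) : Prop :=
  (∀ n, ‖y n‖ = 1) ∧ ∀ f : X →L[ℝ] ℝ, Tendsto (fun n => f (y n)) atTop (nhds 0)

/-- A tree on the unit sphere of `X`: a nonempty set of finite sequences of norm one vectors,
closed under taking initial segments. -/
def IsTreeOnSphere {X : Type*} [NormedAddCommGroup X] (A : Set (List X)) : Prop :=
  A.Nonempty ∧ (∀ l ∈ A, ∀ x ∈ l, ‖x‖ = 1) ∧ ∀ l ∈ A, ∀ l' : List X, l' <+: l → l' ∈ A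

/-- A hereditary tree (H-tree) on the unit sphere of `X`: a tree containing all
subsequences of each of its members. -/
def IsHTree {X : Type*} [NormedAddCommGroup X] (A : Set (List X)) : Prop :=
  IsTreeOnSphere A ∧ ∀ l ∈ A, ∀ l' : List X, List.Sublist l' l → l' ∈ A

/-- The weak derivative of a tree: all members which admit extensions inside the tree along a
normalized weakly null sequence, together with all initial segments of such members. -/
def weakDeriv {X : Type*} [NormedAddCommGroup X] [NormedSpace ℝ X] (A : Set (List X)) :
    Set (List X) :=
  {l | ∃ m ∈ A, l <+: m ∧ ∃ y : ℕ → X, IsNormalizedWeaklyNull y ∧ ∀ n, m ++ [y n] ∈ A}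

/-- The weak index `I_w` of a tree on the unit sphere. -/
def Iw {X : Type*} [NormedAddCommGroup X] [NormedSpace ℝ X] (A : Set (List X)) :
    WithTop Ordinal.{0} :=
  derivIndex weakDeriv A

/-- The tree `F_ρ^X` of finite normalized sequences which `ρ`-dominate the positive part of
the `ℓ_1` norm. -/
def FTree (X : Type*) [NormedAddCommGroup X] [NormedSpace ℝ X] (ρ : ℝ) : Set (List X) :=
  {l | (∀ x ∈ l, ‖x‖ = 1) ∧ ∀ a : ℕ → ℝ, (∀ i, 0 ≤ a i) →
    ρ * (∑ i ∈ Finset.range l.length, a i) ≤ ‖∑ i ∈ Finset.range l.length, a i • l.getD i 0‖}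

/-- A finite sequence is `c`-basic if partial sums of linear combinations are dominated,
with constant `c`, by the full linear combination. -/
def IsCBasicSeq {X : Type*} [NormedAddCommGroup X] [NormedSpace ℝ X] (c : ℝ) (l : List X) : Prop :=
  ∀ a : ℕ → ℝ, ∀ m ≤ l.length,
    ‖∑ i ∈ Finset.range m, a i • l.getD i 0‖ ≤
      c * ‖∑ i ∈ Finset.range l.length, a i • l.getD i 0‖

/-- An order isomorphism between trees: injective on `A`, mapping `A` into `B`, and preserving
and reflecting the strict initial-segment order. -/
def IsTreeOrderIso {X Y : Type*} (A : Set (List X)) (B : Set (List Y))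
    (Ψ : List X → List Y) : Prop :=
  (∀ l ∈ A, Ψ l ∈ B) ∧ Set.InjOn Ψ A ∧
    ∀ l ∈ A, ∀ m ∈ A, ((Ψ l <+: Ψ m ∧ Ψ l ≠ Ψ m) ↔ (l <+: m ∧ l ≠ m))

/-- Condition (2.1.1): `Ψ` maps weakly null extensions in `A` to weakly null extensions. -/
def MapsWeaklyNullExtensions {X Y : Type*} [NormedAddCommGroup X] [NormedSpace ℝ X]
    [NormedAddCommGroup Y] [NormedSpace ℝ Y] (A : Set (List X)) (Ψ : List X → List Y) : Prop :=
  ∀ l ∈ A, ∀ x : ℕ → X, IsNormalizedWeaklyNull x → (∀ k, l ++ [x k] ∈ A) →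
    ∃ y : ℕ → Y, IsNormalizedWeaklyNull y ∧ ∀ k, Ψ (l ++ [x k]) = Ψ l ++ [y k]

/-- `C([0,β])`: the space of continuous functions on the ordinal interval `[0,β]`. -/
abbrev COrd (β : Ordinal.{0}) := BoundedContinuousFunction (Iic β) ℝ

open MeasureTheory Function

section DerivationIterates

variable {α : Type*} (D : Set α → Set α) (K : Set α)

theorem derivIter_zero : derivIter D K 0 = K :=
  Ordinal.limitRecOn_zero ..

theorem derivIter_add_one (o : Ordinal.{0}) :
    derivIter D K (o + 1) = D (derivIter D K o) :=
  Ordinal.limitRecOn_add_one ..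

theorem derivIter_limit {o : Ordinal.{0}} (ho : Order.IsSuccLimit o) :
    derivIter D K o = ⋂ β : {β : Ordinal.{0} // β < o}, derivIter D K β.1 :=
  Ordinal.limitRecOn_limit _ _ _ _ ho

variable {D} in
theorem derivIter_subset (hD : ∀ S, D S ⊆ S) (o : Ordinal.{0}) : derivIter D K o ⊆ K := by
  induction o using Ordinal.limitRecOn with
  | zero => rw [derivIter_zero]
  | add_one o ih => rw [derivIter_add_one]; exact (hD _).trans ih
  | limit o ho ih =>
    rw [derivIter_limit _ _ ho]
    exact (iInter_subset _ ⟨0, ho.bot_lt⟩).trans (ih 0 ho.bot_lt)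

theorem derivIndex_le_derivIndex {β : Type*} (D' : Set β → Set β) (K' : Set β)
    (h : ∀ o : Ordinal.{0}, derivIter D' K' o = ∅ → derivIter D K o = ∅) :
    derivIndex D K ≤ derivIndex D' K' := by
  classical
  by_cases h' : ∃ o : Ordinal.{0}, derivIter D' K' o = ∅
  · have hmin := h _ (csInf_mem h')
    rw [derivIndex, derivIndex, if_pos ⟨_, hmin⟩, if_pos h']
    exact WithTop.coe_le_coe.2 (csInf_le' hmin)
  · rw [derivIndex, derivIndex, if_neg h']
    exact le_top

end DerivationIterates

section DualSpace

variable {X : Type*} [NormedAddCommGroup X] [NormedSpace ℝ X]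

theorem ContinuousLinearMap.exists_norm_le_one_lt_apply (d : X →L[ℝ] ℝ) {r : ℝ} (hr : r < ‖d‖) :
    ∃ x : X, ‖x‖ ≤ 1 ∧ r < d x := by
  obtain ⟨x, hx, hrx⟩ := d.exists_lt_apply_of_lt_opNorm hr
  rcases le_or_gt 0 (d x) with hdx | hdx
  · exact ⟨x, hx.le, by rwa [Real.norm_of_nonneg hdx] at hrx⟩
  · refine ⟨-x, (norm_neg x).trans_le hx.le, ?_⟩
    rwa [Real.norm_eq_abs, abs_of_neg hdx, ← map_neg] at hrx

theorem mem_szlenkDeriv_of_forall_exists_far {K : Set (X →L[ℝ] ℝ)} {ε : ℝ} {f : X →L[ℝ] ℝ}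
    (hf : f ∈ K)
    (hfar : ∀ (n : ℕ) (x : Fin n → X) (δ : ℝ), 0 < δ →
      ∃ g ∈ K, (∀ i, |g (x i) - f (x i)| < δ) ∧ ε ≤ ‖f - g‖) :
    f ∈ szlenkDeriv ε K := by
  refine ⟨hf, fun ⟨U, hU, hfU, hdiam⟩ => ?_⟩
  obtain ⟨n, x, δ, hδ, hball⟩ := hU f hfU
  obtain ⟨g, hgK, hgx, hfg⟩ := hfar n x δ hδ
  have : edist f g ≤ Metric.ediam (K ∩ U) :=
    Metric.edist_le_ediam_of_mem ⟨hf, hfU⟩ ⟨hgK, hball g hgx⟩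
  rw [edist_dist, dist_eq_norm] at this
  exact (this.trans_lt hdiam).not_ge (ENNReal.ofReal_le_ofReal hfg)

theorem exists_far_of_mem_dentDeriv {S : Set (X →L[ℝ] ℝ)} {ε : ℝ} (hε : 0 < ε)
    {g : X →L[ℝ] ℝ} (hg : g ∈ dentDeriv ε S) {x : X} {t : ℝ} (ht : t < g x) :
    ∃ u ∈ S, t < u x ∧ ε / 3 ≤ ‖u - g‖ := by
  by_contra! hnear
  refine hg.2 ⟨x, t, ht, lt_of_le_of_lt (Metric.ediam_le fun u hu v hv => ?_)
    ((ENNReal.ofReal_lt_ofReal_iff hε).2 (by linarith : 2 * ε / 3 < ε))⟩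
  rw [edist_dist, dist_eq_norm]
  refine ENNReal.ofReal_le_ofReal ?_
  have hu' := hnear u hu.1 hu.2
  have hv' := hnear v hv.1 hv.2
  calc ‖u - v‖ = ‖(u - g) - (v - g)‖ := by rw [sub_sub_sub_cancel_right]
    _ ≤ ‖u - g‖ + ‖v - g‖ := norm_sub_le _ _
    _ ≤ 2 * ε / 3 := by linarith

theorem ContinuousLinearMap.apply_pi_eq_apply_sum {ι : Type*} [Fintype ι] [DecidableEq ι]
    (ℓ : (ι → ℝ) →L[ℝ] ℝ) (m : ι → X) (u : X →L[ℝ] ℝ) :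
    ℓ (fun i => u (m i)) = u (∑ i, ℓ (Pi.single i 1) • m i) := by
  have hv : (fun i => u (m i)) = ∑ i, u (m i) • (Pi.single i 1 : ι → ℝ) := by
    ext j; simp [Pi.single_apply]
  simp [hv, map_sum, map_smul, mul_comm]

/-- Hahn–Banach in `ι → ℝ`, applied to the image of `convexHull ℝ F` under evaluation at the
points `m i`. -/
theorem exists_mem_convexHull_near_of_forall_slice {F : Set (X →L[ℝ] ℝ)} {g : X →L[ℝ] ℝ}
    (hF : ∀ (x : X) (t : ℝ), t < g x → ∃ u ∈ F, t < u x)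
    {ι : Type*} [Fintype ι] (m : ι → X) {δ : ℝ} (hδ : 0 < δ) :
    ∃ c ∈ convexHull ℝ F, ∀ i, |c (m i) - g (m i)| < δ := by
  classical
  let π : (X →L[ℝ] ℝ) →ₗ[ℝ] (ι → ℝ) :=
    { toFun := fun u i => u (m i)
      map_add' := fun _ _ => rfl
      map_smul' := fun _ _ => rfl }
  by_cases hg : π g ∈ closure (π '' convexHull ℝ F)
  · obtain ⟨_, ⟨c, hc, rfl⟩, hdist⟩ := Metric.mem_closure_iff.1 hg δ hδ
    refine ⟨c, hc, fun i => ?_⟩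
    rw [abs_sub_comm, ← Real.dist_eq]
    exact (dist_le_pi_dist (π g) (π c) i).trans_lt hdist
  · obtain ⟨ℓ, s, hgs, hsF⟩ := geometric_hahn_banach_point_closed
      ((convex_convexHull ℝ F).linear_image π).closure isClosed_closure hg
    obtain ⟨u, huF, hu⟩ := hF (-∑ i, ℓ (Pi.single i 1) • m i) (-s) (by
      rw [map_neg, ← ℓ.apply_pi_eq_apply_sum]; exact neg_lt_neg hgs)
    rw [map_neg, ← ℓ.apply_pi_eq_apply_sum, neg_lt_neg_iff] at hu
    exact ((hsF _ (subset_closure ⟨u, subset_convexHull ℝ F huF, rfl⟩)).not_gt hu).elim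

end DualSpace

section Partitions

variable {α : Type*} [MeasurableSpace α]

/-- Sierpiński's theorem says that every atomless measure has this property. -/
def HasDarbouxProperty (μ : Measure α) : Prop :=
  ∀ S, MeasurableSet S → ∀ r ≤ μ S, ∃ u ⊆ S, MeasurableSet u ∧ μ u = r

/-- For finite `μ`, `sum_measure` says that the pieces cover `S` up to a `μ`-null set. -/
structure IsMeasurePartition {κ : Type*} [Fintype κ] (μ : Measure α) (A : κ → Set α) (S : Set α) :
    Prop where
  measurableSet : ∀ k, MeasurableSet (A k)
  pairwise_disjoint : Pairwise (Disjoint on A)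
  subset : ∀ k, A k ⊆ S
  sum_measure : ∑ k, μ (A k) = μ S

namespace IsMeasurePartition

variable {μ : Measure α} {κ : Type*} [Fintype κ] {A : κ → Set α} {S : Set α}

theorem of_iUnion_eq
    (hAm : ∀ k, MeasurableSet (A k)) (hAd : Pairwise (Disjoint on A)) (hAS : ⋃ k, A k = S) :
    IsMeasurePartition μ A S where
  measurableSet := hAm
  pairwise_disjoint := hAd
  subset k := hAS ▸ subset_iUnion A k
  sum_measure := by rw [← hAS, measure_iUnion hAd hAm, tsum_fintype]

theorem iUnion_ae_eq [IsFiniteMeasure μ] (hA : IsMeasurePartition μ A S) : ⋃ k, A k =ᵐ[μ] S := by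
  refine ae_eq_of_subset_of_measure_ge (iUnion_subset hA.subset) ?_
    (MeasurableSet.iUnion hA.measurableSet).nullMeasurableSet (measure_ne_top μ S)
  rw [measure_iUnion hA.pairwise_disjoint hA.measurableSet, tsum_fintype, hA.sum_measure]

theorem setIntegral_eq_sum [IsFiniteMeasure μ] (hA : IsMeasurePartition μ A S) {E : Type*}
    [NormedAddCommGroup E] [NormedSpace ℝ E] {f : α → E} (hf : Integrable f μ) :
    ∫ x in S, f x ∂μ = ∑ k, ∫ x in A k, f x ∂μ := by
  rw [← setIntegral_congr_set hA.iUnion_ae_eq,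
    integral_iUnion_fintype hA.measurableSet hA.pairwise_disjoint fun _ => hf.integrableOn]

theorem sigma (hA : IsMeasurePartition μ A S) {ν : κ → Type*} [∀ j, Fintype (ν j)]
    {B : ∀ j, ν j → Set α} (hB : ∀ j, IsMeasurePartition μ (B j) (A j)) :
    IsMeasurePartition μ (fun q : Σ j, ν j => B q.1 q.2) S where
  measurableSet q := (hB q.1).measurableSet q.2
  pairwise_disjoint := by
    rintro ⟨j, k⟩ ⟨j', k'⟩ hne
    by_cases hj : j = j'
    · subst hj
      exact (hB j).pairwise_disjoint fun hk : k = k' => hne (hk ▸ rfl)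
    · exact (hA.pairwise_disjoint hj).mono ((hB j).subset k) ((hB j').subset k')
  subset q := ((hB q.1).subset q.2).trans (hA.subset q.1)
  sum_measure := by
    rw [Fintype.sum_sigma, ← hA.sum_measure]
    exact Finset.sum_congr rfl fun j _ => (hB j).sum_measure

end IsMeasurePartition

variable {μ : Measure α}

theorem HasDarbouxProperty.exists_pairwiseDisjoint_measure_eq [IsFiniteMeasure μ]
    (hμ : HasDarbouxProperty μ) {S : Set α} (hS : MeasurableSet S) {ι : Type*} [DecidableEq ι]
    (w : ι → ℝ≥0∞) (t : Finset ι) (hw : ∑ k ∈ t, w k ≤ 1) :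
    ∃ B : ι → Set α, (∀ k, MeasurableSet (B k)) ∧ (↑t : Set ι).PairwiseDisjoint B ∧
      (∀ k, B k ⊆ S) ∧ ∀ k ∈ t, μ (B k) = w k * μ S := by
  induction t using Finset.induction_on with
  | empty => exact ⟨fun _ => ∅, fun _ => .empty, by simp, fun _ => empty_subset _, by simp⟩
  | insert a t hat ih =>
    rw [Finset.sum_insert hat] at hw
    obtain ⟨B, hBm, hBd, hBS, hBμ⟩ := ih (le_trans le_add_self hw)
    set U := ⋃ k ∈ t, B k
    have hUm : MeasurableSet U := Finset.measurableSet_biUnion t fun k _ => hBm k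
    have hUμ : μ U = (∑ k ∈ t, w k) * μ S := by
      rw [measure_biUnion_finset hBd fun k _ => hBm k, Finset.sum_mul]
      exact Finset.sum_congr rfl hBμ
    have hroom : w a * μ S ≤ μ (S \ U) := by
      rw [measure_sdiff (iUnion₂_subset fun k _ => hBS k) hUm.nullMeasurableSet
        (measure_ne_top μ U), hUμ]
      refine ENNReal.le_sub_of_add_le_right (ENNReal.mul_ne_top
        (ne_top_of_le_ne_top ENNReal.one_ne_top (le_trans le_add_self hw)) (measure_ne_top μ S)) ?_
      rw [← add_mul]
      exact (mul_le_mul_left hw _).trans_eq (one_mul _)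
    obtain ⟨u, huS, hum, huμ⟩ := hμ _ (hS.diff hUm) _ hroom
    refine ⟨update B a u, fun k => ?_, ?_, fun k => ?_, ?_⟩
    · rcases eq_or_ne k a with rfl | hk
      · simpa using hum
      · simpa [hk] using hBm k
    · rw [Finset.coe_insert]
      refine PairwiseDisjoint.insert (fun j hj k hk hjk => ?_) fun k hk hak => ?_
      · have hja : j ≠ a := fun h => hat (h ▸ hj)
        have hka : k ≠ a := fun h => hat (h ▸ hk)
        simpa [Function.onFun, hja, hka] using hBd hj hk hjk
      · have hka : k ≠ a := fun h => hat (h ▸ hk)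
        simp only [update_self, update_of_ne hka]
        exact disjoint_left.2 fun x hxu hxB => (huS hxu).2 (mem_biUnion hk hxB)
    · rcases eq_or_ne k a with rfl | hk
      · simpa using huS.trans sdiff_subset
      · simpa [hk] using hBS k
    · intro k hk
      rcases eq_or_ne k a with rfl | hka
      · simpa using huμ
      · simpa [hka] using hBμ k ((Finset.mem_insert.1 hk).resolve_left hka)

theorem HasDarbouxProperty.exists_partition_measure_eq [IsFiniteMeasure μ]
    (hμ : HasDarbouxProperty μ) {S : Set α} (hS : MeasurableSet S) {ι : Type*} [Fintype ι]
    (w : ι → ℝ) (hw0 : ∀ k, 0 ≤ w k) (hw1 : ∑ k, w k = 1) :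
    ∃ B : ι → Set α, IsMeasurePartition μ B S ∧ ∀ k, μ (B k) = ENNReal.ofReal (w k) * μ S := by
  classical
  have hsum : ∑ k, ENNReal.ofReal (w k) = 1 := by
    rw [← ENNReal.ofReal_sum_of_nonneg fun k _ => hw0 k, hw1, ENNReal.ofReal_one]
  obtain ⟨B, hBm, hBd, hBS, hBμ⟩ :=
    hμ.exists_pairwiseDisjoint_measure_eq hS (fun k => ENNReal.ofReal (w k)) Finset.univ hsum.le
  refine ⟨B, ⟨hBm, ?_, hBS, ?_⟩, fun k => hBμ k (Finset.mem_univ k)⟩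
  · simpa [Finset.coe_univ, PairwiseDisjoint, pairwise_univ] using hBd
  · rw [Finset.sum_congr rfl hBμ, ← Finset.sum_mul, hsum, one_mul]

theorem HasDarbouxProperty.exists_partition_setIntegral_eq_smul [IsFiniteMeasure μ]
    (hμ : HasDarbouxProperty μ) {E : Type*} [NormedAddCommGroup E] [NormedSpace ℝ E]
    [CompleteSpace E] (σ : SimpleFunc α E) {A : Set α} (hA : MeasurableSet A)
    {ι : Type*} [Fintype ι] (w : ι → ℝ) (hw0 : ∀ k, 0 ≤ w k) (hw1 : ∑ k, w k = 1) :
    ∃ B : ι → Set α, IsMeasurePartition μ B A ∧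
      ∀ k, ∫ x in B k, σ x ∂μ = w k • ∫ x in A, σ x ∂μ := by
  -- split each level set of `σ` inside `A` in the proportions `w`
  let C : σ.range → Set α := fun v => A ∩ σ ⁻¹' {v.1}
  have hC : IsMeasurePartition μ C A := by
    refine .of_iUnion_eq (fun v => hA.inter (σ.measurableSet_fiber _)) (fun v v' hvv' => ?_) ?_
    · exact disjoint_left.2 fun x hx hx' => hvv' (Subtype.ext (hx.2.symm.trans hx'.2))
    · exact Subset.antisymm (iUnion_subset fun v => inter_subset_left)
        fun x hx => mem_iUnion.2 ⟨⟨σ x, σ.mem_range_self x⟩, hx, rfl⟩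
  have hconst : ∀ v : σ.range, ∀ D ⊆ C v, MeasurableSet D → ∫ x in D, σ x ∂μ = μ.real D • v.1 :=
    fun v D hDC hD => by
      rw [setIntegral_congr_fun hD fun x hx => (hDC hx).2, setIntegral_const]
  choose B' hB' hB'μ using fun v => hμ.exists_partition_measure_eq (hC.measurableSet v) w hw0 hw1
  have hB'd : ∀ k, Pairwise (Disjoint on fun v => B' v k) := fun k v v' hvv' =>
    (hC.pairwise_disjoint hvv').mono ((hB' v).subset k) ((hB' v').subset k)
  have hB'real : ∀ v k, μ.real (B' v k) = w k * μ.real (C v) := fun v k => by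
    rw [measureReal_def, hB'μ, ENNReal.toReal_mul, ENNReal.toReal_ofReal (hw0 k), measureReal_def]
  refine ⟨fun k => ⋃ v, B' v k, ⟨fun k => .iUnion fun v => (hB' v).measurableSet k, ?_, ?_, ?_⟩,
    fun k => ?_⟩
  · intro k l hkl
    refine disjoint_iUnion_left.2 fun v => disjoint_iUnion_right.2 fun v' => ?_
    rcases eq_or_ne v v' with rfl | hvv'
    · exact (hB' v).pairwise_disjoint hkl
    · exact (hC.pairwise_disjoint hvv').mono ((hB' v).subset k) ((hB' v').subset l)
  · exact fun k => iUnion_subset fun v => ((hB' v).subset k).trans inter_subset_left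
  · simp_rw [measure_iUnion (hB'd _) fun v => (hB' v).measurableSet _, tsum_fintype]
    rw [Finset.sum_comm, ← hC.sum_measure]
    exact Finset.sum_congr rfl fun v _ => (hB' v).sum_measure
  · rw [integral_iUnion_fintype (fun v => (hB' v).measurableSet k) (hB'd k)
      fun _ => (σ.integrable_of_isFiniteMeasure).integrableOn,
      hC.setIntegral_eq_sum σ.integrable_of_isFiniteMeasure, Finset.smul_sum]
    refine Finset.sum_congr rfl fun v _ => ?_
    rw [hconst v _ ((hB' v).subset k) ((hB' v).measurableSet k), hB'real,
      hconst v _ subset_rfl (hC.measurableSet v), smul_smul]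

theorem lipschitzWith_measureReal_restrict_Icc_inter_Iic (a b : ℝ) (S : Set ℝ) :
    LipschitzWith 1 fun x => (volume.restrict (Icc a b)).real (S ∩ Iic x) := by
  refine .of_le_add_mul 1 fun x y => ?_
  set μ := volume.restrict (Icc a b)
  have hsub : S ∩ Iic x ⊆ (S ∩ Iic y) ∪ Ioc y x := fun z hz => by
    rcases le_or_gt z y with hzy | hzy
    · exact .inl ⟨hz.1, hzy⟩
    · exact .inr ⟨hzy, hz.2⟩
  calc μ.real (S ∩ Iic x) ≤ μ.real (S ∩ Iic y) + μ.real (Ioc y x) :=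
        (measureReal_mono hsub (measure_ne_top μ _)).trans (measureReal_union_le _ _)
    _ ≤ μ.real (S ∩ Iic y) + volume.real (Ioc y x) := by
        rw [measureReal_restrict_apply measurableSet_Ioc]
        exact add_le_add_right (measureReal_mono (μ := volume) (s₂ := Ioc y x)
          inter_subset_left measure_Ioc_lt_top.ne) _
    _ ≤ μ.real (S ∩ Iic y) + 1 * dist x y := by
        rw [Real.volume_real_Ioc, one_mul, Real.dist_eq]
        gcongr
        exact max_le (le_abs_self _) (abs_nonneg _)

theorem hasDarbouxProperty_volume_restrict_Icc (a b : ℝ) :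
    HasDarbouxProperty (volume.restrict (Icc a b)) := by
  intro S hS r hr
  set μ := volume.restrict (Icc a b)
  -- the distribution function of `S` is continuous, so it takes every value in `[0, μ S]`
  let φ : ℝ → ℝ := fun x => μ.real (S ∩ Iic x)
  have hlow : φ (a - 1) = 0 := by
    have : S ∩ Iic (a - 1) ∩ Icc a b = ∅ :=
      eq_empty_of_forall_notMem fun z hz => by linarith [mem_Iic.1 hz.1.2, hz.2.1]
    simp [φ, μ, measureReal_def, Measure.restrict_apply (hS.inter measurableSet_Iic), this]
  have hhigh : φ b = μ.real S := by
    simp only [φ, μ, measureReal_def, Measure.restrict_apply (hS.inter measurableSet_Iic),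
      Measure.restrict_apply hS]
    congr 2
    ext z
    simp only [mem_inter_iff, mem_Iic, mem_Icc]
    tauto
  have hr_fin : r ≠ ⊤ := ne_top_of_le_ne_top (measure_ne_top μ S) hr
  obtain ⟨x, -, hx⟩ := intermediate_value_uIcc (a := a - 1) (b := b)
    (lipschitzWith_measureReal_restrict_Icc_inter_Iic a b S).continuous.continuousOn
    (by rw [hlow, hhigh, uIcc_of_le measureReal_nonneg]
        exact ⟨ENNReal.toReal_nonneg, ENNReal.toReal_mono (measure_ne_top μ S) hr⟩ :
      r.toReal ∈ uIcc (φ (a - 1)) (φ b))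
  exact ⟨S ∩ Iic x, inter_subset_left, hS.inter measurableSet_Iic,
    (ENNReal.toReal_eq_toReal_iff' (measure_ne_top μ _) hr_fin).1 hx⟩

end Partitions

section Refinement

variable {α : Type*} [MeasurableSpace α] {μ : Measure α} {X : Type*} [NormedAddCommGroup X]
  [NormedSpace ℝ X] [CompleteSpace X]

/-- Splitting `A` in the proportions of a convex combination of far points that is weak\*-close to
`g` turns the combination into a partition of `A`. -/
theorem HasDarbouxProperty.exists_refinement_of_mem_dentDeriv [IsFiniteMeasure μ]
    (hμ : HasDarbouxProperty μ) {ε : ℝ} (hε : 0 < ε) {S : Set (X →L[ℝ] ℝ)} {g : X →L[ℝ] ℝ}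
    (hg : g ∈ dentDeriv ε S) {A : Set α} (hA : MeasurableSet A) {ι : Type*} [Fintype ι]
    (σ : SimpleFunc α (ι → X)) {δ : ℝ} (hδ : 0 < δ) :
    ∃ (ν : Type) (_ : Fintype ν) (B : ν → Set α) (G : ν → X →L[ℝ] ℝ),
      IsMeasurePartition μ B A ∧ (∀ k, G k ∈ S ∧ ε / 3 ≤ ‖g - G k‖) ∧
      ∀ i, |∑ k, G k ((∫ x in B k, σ x ∂μ) i) - g ((∫ x in A, σ x ∂μ) i)| < δ := by
  obtain ⟨c, hc, hcg⟩ := exists_mem_convexHull_near_of_forall_slice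
    (F := {u | u ∈ S ∧ ε / 3 ≤ ‖u - g‖}) (fun x t ht => by
      obtain ⟨u, huS, hu, hfar⟩ := exists_far_of_mem_dentDeriv hε hg ht
      exact ⟨u, ⟨huS, hfar⟩, hu⟩) (fun i => (∫ x in A, σ x ∂μ) i) hδ
  obtain ⟨ν, _, w, G, hw0, hw1, hG, rfl⟩ := mem_convexHull_iff_exists_fintype.1 hc
  obtain ⟨B, hB, hBσ⟩ := hμ.exists_partition_setIntegral_eq_smul σ hA w hw0 hw1
  refine ⟨ν, inferInstance, B, G, hB, fun k => ⟨(hG k).1, norm_sub_rev g (G k) ▸ (hG k).2⟩,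
    fun i => ?_⟩
  convert hcg i using 3
  simp [hBσ]

end Refinement

section Mixtures

variable {α : Type*} [MeasurableSpace α] {μ : Measure α} {X : Type*} [NormedAddCommGroup X]
  {p : ℝ≥0∞} [Fact (1 ≤ p)]

theorem integral_norm_le_norm_Lp [IsProbabilityMeasure μ] (f : Lp X p μ) :
    ∫ x, ‖f x‖ ∂μ ≤ ‖f‖ := by
  rw [integral_norm_eq_lintegral_enorm (Lp.aestronglyMeasurable f), Lp.norm_def,
    ← eLpNorm_one_eq_lintegral_enorm]
  refine ENNReal.toReal_mono (Lp.eLpNorm_ne_top f) ?_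
  simpa using eLpNorm_le_eLpNorm_mul_rpow_measure_univ (p := 1) (q := p) Fact.out
    (Lp.aestronglyMeasurable f) (μ := μ)

variable [NormedSpace ℝ X] [IsProbabilityMeasure μ]

variable (μ p) in
def setIntegralCLM (A : Set α) : Lp X p μ →L[ℝ] X :=
  LinearMap.mkContinuous
    { toFun f := ∫ x in A, f x ∂μ
      map_add' f g := by
        rw [integral_congr_ae (ae_restrict_of_ae (Lp.coeFn_add f g))]
        exact integral_add ((Lp.memLp f).integrable Fact.out).integrableOn
          ((Lp.memLp g).integrable Fact.out).integrableOn
      map_smul' c f := by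
        rw [integral_congr_ae (ae_restrict_of_ae (Lp.coeFn_smul c f))]
        exact integral_smul c _ } 1
    fun f => calc
      ‖∫ x in A, f x ∂μ‖ ≤ ∫ x in A, ‖f x‖ ∂μ := norm_integral_le_integral_norm _
      _ ≤ ∫ x, ‖f x‖ ∂μ := setIntegral_le_integral ((Lp.memLp f).integrable Fact.out).norm
          (.of_forall fun _ => norm_nonneg _)
      _ ≤ 1 * ‖f‖ := (one_mul ‖f‖).symm ▸ integral_norm_le_norm_Lp f

theorem setIntegralCLM_apply (A : Set α) (f : Lp X p μ) :
    setIntegralCLM μ p A f = ∫ x in A, f x ∂μ := rfl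

variable (μ p) in
def mixtures (S : Set (X →L[ℝ] ℝ)) : Set (Lp X p μ →L[ℝ] ℝ) :=
  {h | ∃ (κ : Type) (_ : Fintype κ) (A : κ → Set α) (g : κ → X →L[ℝ] ℝ),
    IsMeasurePartition μ A univ ∧ (∀ k, g k ∈ S) ∧
      h = ∑ k, (g k).comp (setIntegralCLM μ p (A k))}

theorem mixtures_mono {S S' : Set (X →L[ℝ] ℝ)} (hSS' : S ⊆ S') :
    mixtures μ p S ⊆ mixtures μ p S' := by
  rintro h ⟨κ, _, A, g, hA, hg, rfl⟩
  exact ⟨κ, inferInstance, A, g, hA, fun k => hSS' (hg k), rfl⟩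

theorem comp_setIntegralCLM_univ_mem_mixtures {S : Set (X →L[ℝ] ℝ)} {g : X →L[ℝ] ℝ}
    (hg : g ∈ S) : g.comp (setIntegralCLM μ p univ) ∈ mixtures μ p S :=
  ⟨Unit, inferInstance, fun _ => univ, fun _ => g,
    .of_iUnion_eq (fun _ => .univ) Subsingleton.pairwise (iUnion_const univ),
    fun _ => hg, by simp⟩

theorem norm_le_one_of_mem_mixtures {S : Set (X →L[ℝ] ℝ)} (hS : S ⊆ closedBall 0 1)
    {h : Lp X p μ →L[ℝ] ℝ} (hh : h ∈ mixtures μ p S) : ‖h‖ ≤ 1 := by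
  obtain ⟨κ, _, A, g, hA, hg, rfl⟩ := hh
  refine ContinuousLinearMap.opNorm_le_bound _ zero_le_one fun f => ?_
  have hf := ((Lp.memLp f).integrable Fact.out).norm
  rw [sum_apply]
  calc ‖∑ k, g k (setIntegralCLM μ p (A k) f)‖
      ≤ ∑ k, ‖g k‖ * ‖setIntegralCLM μ p (A k) f‖ :=
        (norm_sum_le _ _).trans (Finset.sum_le_sum fun k _ => (g k).le_opNorm _)
    _ ≤ ∑ k, ∫ x in A k, ‖f x‖ ∂μ := Finset.sum_le_sum fun k _ =>
        (mul_le_of_le_one_left (norm_nonneg _) (mem_closedBall_zero_iff.1 (hS (hg k)))).trans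
          (norm_integral_le_integral_norm _)
    _ = ∫ x, ‖f x‖ ∂μ := by rw [← hA.setIntegral_eq_sum hf, Measure.restrict_univ]
    _ ≤ 1 * ‖f‖ := (one_mul ‖f‖).symm ▸ integral_norm_le_norm_Lp f

variable [CompleteSpace X]

theorem exists_norm_le_one_setIntegralCLM_eq {κ : Type*} [Fintype κ] {B : κ → Set α}
    (hBm : ∀ k, MeasurableSet (B k)) (hBd : Pairwise (Disjoint on B)) (x : κ → X)
    (hx : ∀ k, ‖x k‖ ≤ 1) :
    ∃ f : Lp X p μ, ‖f‖ ≤ 1 ∧ ∀ k, setIntegralCLM μ p (B k) f = μ.real (B k) • x k := by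
  classical
  let F : α → X := fun a => ∑ k, (B k).indicator (fun _ => x k) a
  have hF_eq : ∀ k, ∀ a ∈ B k, F a = x k := fun k a ha => by
    simp only [F]
    rw [Finset.sum_eq_single k (fun j _ hjk => indicator_of_notMem
      (disjoint_left.1 (hBd hjk.symm) ha) _) (by simp), indicator_of_mem ha]
  have hF_le : ∀ a, ‖F a‖ ≤ 1 := fun a => by
    by_cases ha : ∃ k, a ∈ B k
    · obtain ⟨k, hk⟩ := ha
      exact (hF_eq k a hk).symm ▸ hx k
    · simp [F, indicator_of_notMem (not_exists.1 ha _)]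
  have hFm : StronglyMeasurable F := Finset.stronglyMeasurable_fun_sum _ fun k _ =>
    stronglyMeasurable_const.indicator (hBm k)
  have hF : MemLp F p μ := .of_bound hFm.aestronglyMeasurable 1 (.of_forall hF_le)
  refine ⟨hF.toLp F, ?_, fun k => ?_⟩
  · have hnorm := Lp.norm_le_of_ae_bound (f := hF.toLp F) zero_le_one
      (by filter_upwards [MemLp.coeFn_toLp hF] with a ha; rw [ha]; exact hF_le a)
    rwa [measureUnivNNReal, measure_univ, ENNReal.toNNReal_one, NNReal.coe_one, Real.one_rpow,
      one_mul] at hnorm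
  · rw [setIntegralCLM_apply, integral_congr_ae (ae_restrict_of_ae (MemLp.coeFn_toLp hF)),
      setIntegral_congr_fun (hBm k) (hF_eq k), setIntegral_const]

/-- Testing against a unit vector of `L_p(X)` that is a norming vector of `d k` on each `B k`. -/
theorem le_norm_sum_comp_setIntegralCLM {κ : Type*} [Fintype κ] {B : κ → Set α}
    (hB : IsMeasurePartition μ B univ) (d : κ → X →L[ℝ] ℝ) {r : ℝ} (hr : ∀ k, r ≤ ‖d k‖) :
    r ≤ ‖∑ k, (d k).comp (setIntegralCLM μ p (B k))‖ := by
  refine le_of_forall_pos_le_add fun η hη => ?_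
  choose x hx hdx using fun k => (d k).exists_norm_le_one_lt_apply (by linarith [hr k] :
    r - η < ‖d k‖)
  obtain ⟨f, hf, hfB⟩ := exists_norm_le_one_setIntegralCLM_eq (μ := μ) (p := p) hB.measurableSet
    hB.pairwise_disjoint x hx
  have hsum : ∑ k, μ.real (B k) = 1 := by
    simp_rw [measureReal_def]
    rw [← ENNReal.toReal_sum fun k _ => measure_ne_top μ _, hB.sum_measure, measure_univ,
      ENNReal.toReal_one]
  let L := ∑ k, (d k).comp (setIntegralCLM μ p (B k))
  have hLf : L f = ∑ k, μ.real (B k) * d k (x k) := by simp [L, hfB]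
  calc r = ∑ k, μ.real (B k) * (r - η) + η := by rw [← Finset.sum_mul, hsum]; ring
    _ ≤ L f + η := by
        rw [hLf]
        gcongr with k
        exact (hdx k).le
    _ ≤ ‖L‖ * ‖f‖ + η := by gcongr; exact (le_abs_self _).trans (L.le_opNorm f)
    _ ≤ ‖L‖ + η := by gcongr; exact mul_le_of_le_one_right (norm_nonneg _) hf

end Mixtures

section MainEstimate

variable {α : Type*} [MeasurableSpace α] {μ : Measure α} {X : Type*} [NormedAddCommGroup X]
  {p : ℝ≥0∞}

theorem exists_simpleFunc_pi_near (hp : p ≠ ⊤) {ι : Type*} [Fintype ι] (φ : ι → Lp X p μ)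
    {η : ℝ} (hη : 0 < η) :
    ∃ (σ : SimpleFunc α (ι → X)) (ψ : ι → Lp X p μ),
      (∀ i, ψ i =ᵐ[μ] fun x => σ x i) ∧ ∀ i, ‖φ i - ψ i‖ < η := by
  obtain ⟨σ, hσ, hσLp⟩ := (memLp_pi_iff.2 fun i => Lp.memLp (φ i)).exists_simpleFunc_eLpNorm_sub_lt
    hp (ENNReal.ofReal_pos.2 hη).ne'
  refine ⟨σ, fun i => (memLp_pi_iff.1 hσLp i).toLp _, fun i => MemLp.coeFn_toLp _, fun i => ?_⟩
  rw [Lp.norm_def, eLpNorm_congr_ae ((Lp.coeFn_sub _ _).trans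
    (EventuallyEq.rfl.sub (MemLp.coeFn_toLp _)))]
  refine ENNReal.toReal_lt_of_lt_ofReal (lt_of_le_of_lt (eLpNorm_mono fun x => ?_) hσ)
  exact norm_le_pi_norm (fun j => φ j x - σ x j) i

variable [NormedSpace ℝ X] [CompleteSpace X] [Fact (1 ≤ p)] [IsProbabilityMeasure μ]

theorem HasDarbouxProperty.exists_mem_mixtures_near_far_of_simpleFunc (hμ : HasDarbouxProperty μ)
    {ε : ℝ} (hε : 0 < ε) {S : Set (X →L[ℝ] ℝ)} {h : Lp X p μ →L[ℝ] ℝ}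
    (hh : h ∈ mixtures μ p (dentDeriv ε S)) {ι : Type*} [Fintype ι] (σ : SimpleFunc α (ι → X))
    (φ : ι → Lp X p μ) (hφ : ∀ i, φ i =ᵐ[μ] fun x => σ x i) {δ : ℝ} (hδ : 0 < δ) :
    ∃ h' ∈ mixtures μ p S, (∀ i, |h' (φ i) - h (φ i)| < δ) ∧ ε / 4 < ‖h - h'‖ := by
  obtain ⟨κ, _, A, g, hA, hg, rfl⟩ := hh
  set δ' := δ / (Fintype.card κ + 1)
  choose ν _ B G hB hG hclose using fun j =>
    hμ.exists_refinement_of_mem_dentDeriv hε (hg j) (hA.measurableSet j) σ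
      (by positivity : 0 < δ')
  have hT : ∀ D i, setIntegralCLM μ p D (φ i) = (∫ x in D, σ x ∂μ) i := fun D i => by
    rw [setIntegralCLM_apply, integral_congr_ae (ae_restrict_of_ae (hφ i)), eval_integral
      (integrable_pi_iff.1 σ.integrable_of_isFiniteMeasure.integrableOn)]
  have hrefine : ∑ j, (g j).comp (setIntegralCLM μ p (A j)) =
      ∑ q : Σ j, ν j, (g q.1).comp (setIntegralCLM μ p (B q.1 q.2)) := by
    ext f
    simp only [sum_apply, ContinuousLinearMap.comp_apply, Fintype.sum_sigma, ← map_sum,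
      setIntegralCLM_apply]
    congr! 2 with j
    exact (hB j).setIntegral_eq_sum ((Lp.memLp f).integrable Fact.out)
  refine ⟨∑ q : Σ j, ν j, (G q.1 q.2).comp (setIntegralCLM μ p (B q.1 q.2)),
    ⟨_, inferInstance, _, _, hA.sigma hB, fun q => (hG q.1 q.2).1, rfl⟩, fun i => ?_, ?_⟩
  · simp only [sum_apply, ContinuousLinearMap.comp_apply, hT, Fintype.sum_sigma,
      ← Finset.sum_sub_distrib]
    calc _ ≤ ∑ j, |∑ k, G j k ((∫ x in B j k, σ x ∂μ) i) - g j ((∫ x in A j, σ x ∂μ) i)| :=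
          Finset.abs_sum_le_sum_abs _ _
      _ ≤ ∑ _j : κ, δ' := Finset.sum_le_sum fun j _ => (hclose j i).le
      _ < δ := by
          rw [Finset.sum_const, Finset.card_univ, nsmul_eq_mul, ← mul_div_assoc,
            div_lt_iff₀ (by positivity)]
          linarith
  · rw [hrefine, ← Finset.sum_sub_distrib]
    simp_rw [← ContinuousLinearMap.sub_comp]
    exact (by linarith : ε / 4 < ε / 3).trans_le
      (le_norm_sum_comp_setIntegralCLM (hA.sigma hB) _ fun q => (hG q.1 q.2).2)

/-- Test functions can be replaced by simple ones since all the functionals involved have norm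
at most `1`. -/
theorem HasDarbouxProperty.exists_mem_mixtures_near_far (hμ : HasDarbouxProperty μ)
    (hp : p ≠ ⊤) {ε : ℝ} (hε : 0 < ε) {S : Set (X →L[ℝ] ℝ)} (hS : S ⊆ closedBall 0 1)
    {h : Lp X p μ →L[ℝ] ℝ} (hh : h ∈ mixtures μ p (dentDeriv ε S)) {ι : Type*} [Fintype ι]
    (φ : ι → Lp X p μ) {δ : ℝ} (hδ : 0 < δ) :
    ∃ h' ∈ mixtures μ p S, (∀ i, |h' (φ i) - h (φ i)| < δ) ∧ ε / 4 < ‖h - h'‖ := by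
  obtain ⟨σ, ψ, hψσ, hφψ⟩ := exists_simpleFunc_pi_near hp φ (by positivity : 0 < δ / 4)
  obtain ⟨h', hh', hclose, hfar⟩ :=
    hμ.exists_mem_mixtures_near_far_of_simpleFunc hε hh σ ψ hψσ (by positivity : 0 < δ / 2)
  refine ⟨h', hh', fun i => ?_, hfar⟩
  have hshift : ∀ u ∈ mixtures μ p S, |u (φ i) - u (ψ i)| < δ / 4 := fun u hu => by
    rw [← map_sub, ← Real.norm_eq_abs]
    exact (u.le_opNorm _).trans_lt ((mul_le_of_le_one_left (norm_nonneg _)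
      (norm_le_one_of_mem_mixtures hS hu)).trans_lt (hφψ i))
  have h₁ := hshift h' hh'
  have h₂ := hshift h (mixtures_mono (fun _ hg => hg.1) hh)
  have e₁ := abs_sub_le (h' (φ i)) (h' (ψ i)) (h (φ i))
  have e₂ := abs_sub_le (h' (ψ i)) (h (ψ i)) (h (φ i))
  rw [abs_sub_comm] at h₂
  linarith [hclose i]

theorem HasDarbouxProperty.mixtures_derivIter_dentDeriv_subset (hμ : HasDarbouxProperty μ)
    (hp : p ≠ ⊤) {ε : ℝ} (hε : 0 < ε) (o : Ordinal.{0}) :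
    mixtures μ p (derivIter (dentDeriv ε) (closedBall (0 : X →L[ℝ] ℝ) 1) o) ⊆
      derivIter (szlenkDeriv (ε / 4)) (closedBall (0 : Lp X p μ →L[ℝ] ℝ) 1) o := by
  induction o using Ordinal.limitRecOn with
  | zero =>
    rw [derivIter_zero, derivIter_zero]
    exact fun h hh => mem_closedBall_zero_iff.2 (norm_le_one_of_mem_mixtures subset_rfl hh)
  | add_one o ih =>
    rw [derivIter_add_one, derivIter_add_one]
    refine fun h hh => mem_szlenkDeriv_of_forall_exists_far
      (ih (mixtures_mono (fun _ hg => hg.1) hh)) fun n x δ hδ => ?_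
    obtain ⟨h', hh', hclose, hfar⟩ := hμ.exists_mem_mixtures_near_far hp hε
      (derivIter_subset _ (fun _ _ hg => hg.1) o) hh x hδ
    exact ⟨h', ih hh', hclose, hfar.le⟩
  | limit o ho ih =>
    rw [derivIter_limit _ _ ho, derivIter_limit _ _ ho]
    exact fun h hh => mem_iInter.2 fun β => ih β.1 β.2 (mixtures_mono (iInter_subset _ β) hh)

theorem HasDarbouxProperty.DzEps_le_SzEps_Lp (hμ : HasDarbouxProperty μ) (hp : p ≠ ⊤) {ε : ℝ}
    (hε : 0 < ε) : DzEps X ε ≤ SzEps (Lp X p μ) (ε / 4) :=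
  derivIndex_le_derivIndex _ _ _ _ fun o ho => eq_empty_of_forall_notMem fun g hg => by
    simpa [ho] using hμ.mixtures_derivIter_dentDeriv_subset hp hε o
      (comp_setIntegralCLM_univ_mem_mixtures hg)

end MainEstimate

instance : IsProbabilityMeasure (volume.restrict (Icc (0 : ℝ) 1)) :=
  ⟨by simp [Real.volume_Icc]⟩

theorem dentability_le_szlenk_Lp_general
    (X : Type) [NormedAddCommGroup X] [NormedSpace ℝ X] [CompleteSpace X]
    (p : ℝ≥0∞) (hp' : p ≠ ⊤) [Fact (1 ≤ p)] :
    Dz X ≤ Sz (LpOn X p) :=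
  iSup_le fun ε => ((hasDarbouxProperty_volume_restrict_Icc 0 1).DzEps_le_SzEps_Lp hp' ε.2).trans
    (le_iSup_of_le ⟨ε.1 / 4, by linarith [ε.2]⟩ le_rfl)

/-- If `X` has separable dual and `1 < p < ∞` then `Dz(X) ≤ Sz(L_p(X))`. -/
theorem dentability_le_szlenk_Lp
    (X : Type) [NormedAddCommGroup X] [NormedSpace ℝ X] [CompleteSpace X]
    (hsep : TopologicalSpace.SeparableSpace (X →L[ℝ] ℝ))
    (p : ℝ≥0∞) (hp : 1 < p) (hp' : p ≠ ⊤) [Fact (1 ≤ p)] :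
    Dz X ≤ Sz (LpOn X p) :=
  dentability_le_szlenk_Lp_general X p hp'

end
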